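/- The class ℱ of forest tournaments contains the tournaments U_3 and N, but contains none of the tournaments D_3, S_3, Δ_2. -/

import Mathlib

/-- A tournament: a finite vertex type with an orientation of each pair of
distinct vertices. -/
structure Tournament : Type 1 where
  V : Type
  [fintypeV : Fintype V]
  adj : V → V → Prop
  irrefl : ∀ v, ¬ adj v v
  total : ∀ u v, u ≠ v → adj u v ∨ adj v u
  asymm : ∀ u v, adj u v → ¬ adj v u

attribute [instance] Tournament.fintypeV

namespace Tournament

/-- A set of vertices is transitive: the induced subtournament has no directed
cycle (equivalently, the adjacency relation is transitive on it). -/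
def IsTransSet (T : Tournament) (S : Set T.V) : Prop :=
  ∀ a ∈ S, ∀ b ∈ S, ∀ c ∈ S, T.adj a b → T.adj b c → T.adj a c

/-- The chromatic number of a tournament: least number of transitive sets
partitioning the vertex set. -/
noncomputable def chromNum (T : Tournament) : ℕ :=
  sInf {k | ∃ c : T.V → Fin k, ∀ i, T.IsTransSet {v | c v = i}}

/-- `T.Contains S`: `S` is isomorphic to a subtournament of `T`. -/
def Contains (T S : Tournament) : Prop :=
  ∃ f : S.V → T.V, Function.Injective f ∧ ∀ u v, S.adj u v ↔ T.adj (f u) (f v)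

/-- `T.Iso S`: `T` and `S` are isomorphic tournaments. -/
def Iso (T S : Tournament) : Prop :=
  ∃ f : S.V → T.V, Function.Bijective f ∧ ∀ u v, S.adj u v ↔ T.adj (f u) (f v)

/-- A set of tournaments is heroic if excluding all its members bounds the
chromatic number. -/
def Heroic (H : Set Tournament) : Prop :=
  ∃ c, ∀ T : Tournament, (∀ X ∈ H, ¬ T.Contains X) → T.chromNum ≤ c

/-- A tournament is a hero if `{H}` is heroic. -/
def IsHero (H : Tournament) : Prop :=
  ∃ c, ∀ T : Tournament, ¬ T.Contains H → T.chromNum ≤ c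

/-- A class of tournaments is hereditary if closed under subtournaments up to
isomorphism. -/
def Hereditary (C : Set Tournament) : Prop :=
  ∀ T ∈ C, ∀ S : Tournament, T.Contains S → S ∈ C

def StronglyConnected (T : Tournament) : Prop :=
  ∀ u v : T.V, Relation.ReflTransGen T.adj u v

/-- A transitive tournament (no directed cycle). -/
def IsTransTour (T : Tournament) : Prop :=
  ∀ a b c : T.V, T.adj a b → T.adj b c → T.adj a c

/-- Direction rule for Δ-partitions with 0-based part-indices (a part is at an
odd position in the 1-based sense iff its 0-based index is even).
`deltaDir i j` holds iff part `i` is complete to part `j`: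
for `i < j`, part `j` beats part `i` iff both positions are (1-based) odd. -/
def deltaDir {m : ℕ} (i j : Fin m) : Prop :=
  (i < j ∧ ¬ (Even i.1 ∧ Even j.1)) ∨ (j < i ∧ (Even i.1 ∧ Even j.1))

theorem deltaDir_irrefl {m : ℕ} (i : Fin m) : ¬ deltaDir i i := by
  rintro (⟨h, _⟩ | ⟨h, _⟩) <;> exact lt_irrefl _ h

theorem deltaDir_total {m : ℕ} {i j : Fin m} (h : i ≠ j) : deltaDir i j ∨ deltaDir j i := by
  rcases lt_or_gt_of_ne h with hl | hl
  · by_cases he : Even i.1 ∧ Even j.1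
    · exact Or.inr (Or.inr ⟨hl, he.2, he.1⟩)
    · exact Or.inl (Or.inl ⟨hl, he⟩)
  · by_cases he : Even i.1 ∧ Even j.1
    · exact Or.inl (Or.inr ⟨hl, he⟩)
    · exact Or.inr (Or.inl ⟨hl, fun hc => he ⟨hc.2, hc.1⟩⟩)

theorem deltaDir_asymm {m : ℕ} {i j : Fin m} (h : deltaDir i j) : ¬ deltaDir j i := by
  rcases h with ⟨h1, h2⟩ | ⟨h1, h2⟩ <;> rintro (⟨g1, g2⟩ | ⟨g1, g2⟩)
  · exact lt_asymm h1 g1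
  · exact h2 ⟨g2.2, g2.1⟩
  · exact g2 ⟨h2.2, h2.1⟩
  · exact lt_asymm h1 g1

/-- The tournament `Δ(F 0, F 1, …, F (m-1))` given by a Δ-partition rule:
within a part use the part's edges; between parts, edges follow `deltaDir`.
For `m = 3` this is the trisection `Δ(A,B,C)` (`X ⇒ Y`, `Y ⇒ Z`, `Z ⇒ X`),
and for `m = 2` it is `F 0 ⇒ F 1`. -/
def deltaSum {m : ℕ} (F : Fin m → Tournament) : Tournament where
  V := (i : Fin m) × (F i).V
  adj x y := deltaDir x.1 y.1 ∨
    ∃ (i : Fin m) (u v : (F i).V), (F i).adj u v ∧ x = ⟨i, u⟩ ∧ y = ⟨i, v⟩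
  irrefl := by
    rintro x (h | ⟨i, u, v, hadj, rfl, h2⟩)
    · exact deltaDir_irrefl _ h
    · injection h2 with h h'
      subst h'
      exact (F i).irrefl u hadj
  total := by
    rintro ⟨i, a⟩ ⟨j, b⟩ hne
    by_cases hij : i = j
    · subst hij
      have hab : a ≠ b := fun h => hne (by rw [h])
      rcases (F i).total a b hab with h | h
      · exact Or.inl (Or.inr ⟨i, a, b, h, rfl, rfl⟩)
      · exact Or.inr (Or.inr ⟨i, b, a, h, rfl, rfl⟩)
    · rcases deltaDir_total hij with h | h
      · exact Or.inl (Or.inl h)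
      · exact Or.inr (Or.inl h)
  asymm := by
    rintro x y hxy hyx
    rcases hxy with h | ⟨i, u, v, hadj, rfl, rfl⟩
    · rcases hyx with g | ⟨j, p, q, gadj, rfl, rfl⟩
      · exact deltaDir_asymm h g
      · exact deltaDir_irrefl _ h
    · rcases hyx with g | ⟨j, p, q, gadj, h1, h2⟩
      · exact deltaDir_irrefl _ g
      · injection h1 with hij hp
        subst hij
        obtain rfl := eq_of_heq hp
        injection h2 with h h'
        subst h'
        exact (F i).asymm u v hadj gadj

/-- The one-vertex tournament `I`. -/
def oneTour : Tournament where
  V := Unit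
  adj _ _ := False
  irrefl := fun _ h => h
  total := fun u v h => (h (Subsingleton.elim u v)).elim
  asymm := fun _ _ h => h.elim

/-- The transitive tournament `L k` on `k` vertices. -/
def linTour (k : ℕ) : Tournament where
  V := Fin k
  adj i j := i < j
  irrefl := fun v => lt_irrefl v
  total := fun _ _ h => lt_or_gt_of_ne h
  asymm := fun _ _ h => lt_asymm h

/-- `Dtour n` is the tournament `D_n`: `D_1 = I`, `D_n = Δ(I, D_{n-1}, D_{n-1})`. -/
def Dtour : ℕ → Tournament
  | 0 => oneTour
  | 1 => oneTour
  | n + 2 => deltaSum ![oneTour, Dtour (n + 1), Dtour (n + 1)]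

/-- `Atour n` is the tournament `A_n`: `A_1 = I`, and `A_n` is a Δ-sum with
`2n-1` parts, the (1-based) odd positions being single vertices and the even
positions copies of `A_{n-1}`. -/
def Atour : ℕ → Tournament
  | 0 => oneTour
  | 1 => oneTour
  | n + 2 =>
      deltaSum fun t : Fin (2 * (n + 2) - 1) => if Even t.1 then oneTour else Atour (n + 1)

/-- `Utour n` is the tournament `U_n = Δ(I, I, …, I)` with `2n-1` one-vertex parts. -/
def Utour (n : ℕ) : Tournament :=
  deltaSum fun _ : Fin (2 * n - 1) => oneTour

/-- `𝒟`: the closure of `{D_n : n ≥ 1}` under subtournaments up to isomorphism. -/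
def classD : Set Tournament :=
  {T | ∃ n : ℕ, 1 ≤ n ∧ (Dtour n).Contains T}

/-- `𝒜`: the closure of `{A_n : n ≥ 1}` under subtournaments up to isomorphism. -/
def classA : Set Tournament :=
  {T | ∃ n : ℕ, 1 ≤ n ∧ (Atour n).Contains T}

/-- `Δ₂ = Δ(L₂, L₂, L₂)`. -/
def delta2 : Tournament :=
  deltaSum ![linTour 2, linTour 2, linTour 2]

/-- The tournament `N`. -/
def Ntour : Tournament where
  V := Fin 5
  adj i j :=
    ![![false, true, false, true, false],
      ![false, false, true, true, true],
      ![true, false, false, true, true],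
      ![false, false, false, false, true],
      ![true, false, false, false, false]] i j = true
  irrefl := by decide
  total := by decide
  asymm := by decide

/-- The tournament `S₃`: `v_i → v_j` iff `j - i ∈ {1, 2} (mod 5)`. -/
def Stour3 : Tournament where
  V := Fin 5
  adj i j := (j.1 + 5 - i.1) % 5 = 1 ∨ (j.1 + 5 - i.1) % 5 = 2
  irrefl := by decide
  total := by decide
  asymm := by decide

/-- A vertex `v` outside `S` is mixed on `S` if it has both an out-neighbor and
an in-neighbor in `S`. -/
def MixedOn (T : Tournament) (v : T.V) (S : Set T.V) : Prop :=
  (∃ s ∈ S, T.adj v s) ∧ (∃ s ∈ S, T.adj s v)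

/-- A homogeneous set: `1 < |S| < |V(T)|` and no vertex outside `S` is mixed on `S`. -/
def Homog (T : Tournament) (S : Set T.V) : Prop :=
  1 < S.ncard ∧ S.ncard < Nat.card T.V ∧ ∀ v ∉ S, ¬ T.MixedOn v S

/-- A prime tournament has no homogeneous set. -/
def Prime (T : Tournament) : Prop := ¬ ∃ S : Set T.V, T.Homog S

/-- `P` is a Δ-partition of `T` with parts `P 0, …, P (m-1)`:
the parts are nonempty, partition `V(T)`, and all edges between distinct parts
follow the rule `deltaDir`. -/
def IsDeltaPartition (T : Tournament) {m : ℕ} (P : Fin m → Set T.V) : Prop :=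
  (∀ i, (P i).Nonempty) ∧
  (∀ v : T.V, ∃! i, v ∈ P i) ∧
  (∀ i j, i ≠ j → ∀ u ∈ P i, ∀ v ∈ P j, (T.adj u v ↔ deltaDir i j))

/-- The induced subtournament on a set of vertices. -/
noncomputable def induce (T : Tournament) (S : Set T.V) : Tournament where
  V := ↥S
  fintypeV := (Set.toFinite S).fintype
  adj u v := T.adj u.1 v.1
  irrefl := fun v => T.irrefl v.1
  total := fun u v h => T.total u.1 v.1 (fun hh => h (Subtype.ext hh))
  asymm := fun u v h => T.asymm u.1 v.1 h

/-- `u` and `v` are joined by an edge of the backedge graph of the ordering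
given by the list `l`: the `T`-edge between them goes backwards in `l`. -/
def BackAdj (T : Tournament) (l : List T.V) (u v : T.V) : Prop :=
  (T.adj u v ∧ [v, u].Sublist l) ∨ (T.adj v u ∧ [u, v].Sublist l)

/-- The backedge graph `B_σ(T)` of the ordering `σ = l`. -/
def backGraph (T : Tournament) (l : List T.V) : SimpleGraph T.V where
  Adj u v := T.BackAdj l u v
  symm := by
    constructor
    intro u v h
    rcases h with ⟨h, s⟩ | ⟨h, s⟩
    · exact Or.inr ⟨h, s⟩
    · exact Or.inl ⟨h, s⟩
  loopless := by
    constructor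
    intro v h
    rcases h with ⟨h, _⟩ | ⟨h, _⟩ <;> exact T.irrefl v h

/-- Forest orderings: a one-element ordering is a forest ordering, and the
concatenation `l₁ ++ l₂` of two nonempty forest orderings is one provided no
two edges of the backedge graph going between `l₁` and `l₂` lie in the same
connected component of the backedge graph. -/
inductive IsForestOrdering (T : Tournament) : List T.V → Prop
  | single (v : T.V) : IsForestOrdering T [v]
  | split (l₁ l₂ : List T.V) (h₁ : l₁ ≠ []) (h₂ : l₂ ≠ [])
      (hsep : ∀ a ∈ l₁, ∀ b ∈ l₂, ∀ c ∈ l₁, ∀ d ∈ l₂,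
        T.BackAdj (l₁ ++ l₂) a b → T.BackAdj (l₁ ++ l₂) c d →
        Relation.ReflTransGen (T.BackAdj (l₁ ++ l₂)) a c → a = c ∧ b = d)
      (f₁ : IsForestOrdering T l₁) (f₂ : IsForestOrdering T l₂) :
      IsForestOrdering T (l₁ ++ l₂)

/-- A forest tournament: one admitting a forest ordering of its vertex set. -/
def IsForestTournament (T : Tournament) : Prop :=
  ∃ l : List T.V, l.Nodup ∧ (∀ v, v ∈ l) ∧ IsForestOrdering T l

/-- The set of ordered pairs realizing backedges between `l₁` and `l₂`. -/
def splitEdges (T : Tournament) (l l₁ l₂ : List T.V) : Set (T.V × T.V) :=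
  {p | p.1 ∈ l₁ ∧ p.2 ∈ l₂ ∧ T.BackAdj l p.1 p.2}

/-- The thickness of the backedge graph of `l`: the minimum number of backedges
crossing a split of `l` into two nonempty intervals. -/
noncomputable def thickness (T : Tournament) (l : List T.V) : ℕ :=
  sInf {k | ∃ l₁ l₂ : List T.V, l = l₁ ++ l₂ ∧ l₁ ≠ [] ∧ l₂ ≠ [] ∧
    k = (T.splitEdges l l₁ l₂).ncard}

/-- The "length" `|φ x - φ y|` of an unordered pair under `φ`. -/
def phiLen {α : Type} (φ : α → ℕ) : Sym2 α → ℕ :=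
  Sym2.lift ⟨fun u v => max (φ u) (φ v) - min (φ u) (φ v), fun u v => by
    show max (φ u) (φ v) - min (φ u) (φ v) = max (φ v) (φ u) - min (φ v) (φ u)
    rw [max_comm (φ u) (φ v), min_comm (φ u) (φ v)]⟩

/-- The backedge graph of the ordering `σ_φ` induced by `φ`. -/
def backGraphPhi (T : Tournament) (φ : T.V → ℕ) : SimpleGraph T.V where
  Adj u v := (T.adj u v ∧ φ v < φ u) ∨ (T.adj v u ∧ φ u < φ v)
  symm := by
    constructor
    intro u v h
    rcases h with h | h
    · exact Or.inr h
    · exact Or.inl h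
  loopless := by
    constructor
    intro v h
    rcases h with ⟨_, h⟩ | ⟨_, h⟩ <;> exact lt_irrefl _ h

/-- Two distinct edges `e`, `f` of `B_{σ_φ}(T)` are `(r,s)`-comparable under `φ`:
some path with at most `s` edges contains both, and `1/r ≤ φ(e)/φ(f) ≤ r`. -/
def Comparable (T : Tournament) (φ : T.V → ℕ) (r s : ℕ) (e f : Sym2 T.V) : Prop :=
  e ≠ f ∧
  (∃ (a b : T.V) (p : (T.backGraphPhi φ).Walk a b),
      p.IsPath ∧ p.length ≤ s ∧ e ∈ p.edges ∧ f ∈ p.edges) ∧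
  phiLen φ e ≤ r * phiLen φ f ∧ phiLen φ f ≤ r * phiLen φ e

/-- The class `𝒞_{(r,s)}`. -/
def classC (r s : ℕ) : Set Tournament :=
  {T | ∃ φ : T.V → ℕ, (∀ v, 0 < φ v) ∧ Function.Injective φ ∧
    ∀ e ∈ (T.backGraphPhi φ).edgeSet, ∀ f ∈ (T.backGraphPhi φ).edgeSet,
      ¬ Comparable T φ r s e f}

/-- `φ` is `r`-incomparable: it is an injective positive labelling such that any
two distinct edges of `B_{σ_φ}(T)` in the same connected component have length
ratio greater than `r` (or less than `1/r`). -/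
def RIncomp (T : Tournament) (φ : T.V → ℕ) (r : ℕ) : Prop :=
  (∀ v, 0 < φ v) ∧ Function.Injective φ ∧
  ∀ e ∈ (T.backGraphPhi φ).edgeSet, ∀ f ∈ (T.backGraphPhi φ).edgeSet, e ≠ f →
    (∃ a b, a ∈ e ∧ b ∈ f ∧ (T.backGraphPhi φ).Reachable a b) →
    (r * phiLen φ f < phiLen φ e ∨ r * phiLen φ e < phiLen φ f)

/-- `l` is an ordering of the vertex set of `T`. -/
def IsOrdering (T : Tournament) (l : List T.V) : Prop :=
  l.Nodup ∧ ∀ v, v ∈ l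

/-- The ordering `l` is incomparable: for every `r ≥ 1` there is an
`r`-incomparable `φ` with `σ_φ = l` (i.e. `φ` strictly increasing along `l`). -/
def IsIncompOrdering (T : Tournament) (l : List T.V) : Prop :=
  ∀ r : ℕ, 0 < r → ∃ φ : T.V → ℕ, RIncomp T φ r ∧ l.Pairwise (fun u v => φ u < φ v)

end Tournament

/-!
If `l₁ ++ l₂` is a forest ordering, the backward edges between `l₁` and `l₂` form a matching,
since two of them sharing an end lie in one component of the backedge graph. For the same reason
no two of their ends in `l₁` are joined by a backward edge, so these ends are ordered by `l₁`
consistently with `T`, and `T` is transitive on them. No vertex partition of `D₃`, `S₃` or `Δ₂`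
has these two properties, which is checked over all subsets.

Conversely, an ordering in which every vertex beats at most one earlier vertex is a forest
ordering: splitting off the last vertex leaves at most one crossing backward edge. `N` and `U₃`
have such orderings.
-/

open scoped List

namespace Tournament

section Decidable

instance : DecidableEq oneTour.V := inferInstanceAs (DecidableEq Unit)

instance : DecidableRel oneTour.adj := fun _ _ => inferInstanceAs (Decidable False)

instance (k : ℕ) : DecidableEq (linTour k).V := inferInstanceAs (DecidableEq (Fin k))

instance (k : ℕ) : DecidableRel (linTour k).adj := fun a b =>
  inferInstanceAs (Decidable ((show Fin k from a) < b))

instance {m : ℕ} (i j : Fin m) : Decidable (deltaDir i j) := by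
  unfold deltaDir; infer_instance

instance {m : ℕ} {F : Fin m → Tournament} [∀ i, DecidableEq (F i).V] :
    DecidableEq (deltaSum F).V :=
  inferInstanceAs (DecidableEq ((i : Fin m) × (F i).V))

instance {m : ℕ} {F : Fin m → Tournament} [∀ i, DecidableEq (F i).V]
    [∀ i, DecidableRel (F i).adj] : DecidableRel (deltaSum F).adj := fun x y =>
  inferInstanceAs (Decidable (deltaDir x.1 y.1 ∨
    ∃ (i : Fin m) (u v : (F i).V), (F i).adj u v ∧
      (show (j : Fin m) × (F j).V from x) = ⟨i, u⟩ ∧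
      (show (j : Fin m) × (F j).V from y) = ⟨i, v⟩))

instance {n : ℕ} {A : Tournament} {F : Fin n → Tournament} [DecidableEq A.V]
    [∀ i, DecidableEq (F i).V] (i : Fin (n + 1)) : DecidableEq (Matrix.vecCons A F i).V :=
  Fin.cases (motive := fun i => DecidableEq (Matrix.vecCons A F i).V) ‹_› ‹_› i

instance {n : ℕ} {A : Tournament} {F : Fin n → Tournament} [DecidableRel A.adj]
    [∀ i, DecidableRel (F i).adj] (i : Fin (n + 1)) :
    DecidableRel (Matrix.vecCons A F i).adj :=
  Fin.cases (motive := fun i => DecidableRel (Matrix.vecCons A F i).adj) ‹_› ‹_› i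

instance (i : Fin 0) : DecidableEq (Matrix.vecEmpty i : Tournament).V := i.elim0

instance (i : Fin 0) : DecidableRel (Matrix.vecEmpty i : Tournament).adj := i.elim0

instance Dtour.instDecidableEq : ∀ n, DecidableEq (Dtour n).V
  | 0 | 1 => inferInstanceAs (DecidableEq oneTour.V)
  | n + 2 =>
    have := Dtour.instDecidableEq (n + 1)
    inferInstanceAs (DecidableEq (deltaSum ![oneTour, Dtour (n + 1), Dtour (n + 1)]).V)

instance Dtour.instDecidableRel : ∀ n, DecidableRel (Dtour n).adj
  | 0 | 1 => inferInstanceAs (DecidableRel oneTour.adj)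
  | n + 2 =>
    have := Dtour.instDecidableEq (n + 1)
    have := Dtour.instDecidableRel (n + 1)
    inferInstanceAs (DecidableRel (deltaSum ![oneTour, Dtour (n + 1), Dtour (n + 1)]).adj)

instance (n : ℕ) : DecidableEq (Utour n).V :=
  inferInstanceAs (DecidableEq (deltaSum fun _ : Fin (2 * n - 1) => oneTour).V)

instance (n : ℕ) : DecidableRel (Utour n).adj :=
  inferInstanceAs (DecidableRel (deltaSum fun _ : Fin (2 * n - 1) => oneTour).adj)

instance : DecidableEq delta2.V :=
  inferInstanceAs (DecidableEq (deltaSum ![linTour 2, linTour 2, linTour 2]).V)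

instance : DecidableRel delta2.adj :=
  inferInstanceAs (DecidableRel (deltaSum ![linTour 2, linTour 2, linTour 2]).adj)

instance : DecidableEq Stour3.V := inferInstanceAs (DecidableEq (Fin 5))

instance : DecidableRel Stour3.adj := fun _ _ => inferInstanceAs (Decidable (_ ∨ _))

instance (T : Tournament) [DecidableRel T.adj] (S : Set T.V) [DecidablePred (· ∈ S)] :
    Decidable (T.IsTransSet S) := by
  unfold IsTransSet; infer_instance

end Decidable

variable {T : Tournament}

theorem BackAdj.mono {l l' : List T.V} (hl : l <+ l') {a b : T.V} :
    T.BackAdj l a b → T.BackAdj l' a b := by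
  rintro (⟨h, s⟩ | ⟨h, s⟩)
  exacts [Or.inl ⟨h, s.trans hl⟩, Or.inr ⟨h, s.trans hl⟩]

theorem backAdj_append_iff {l₁ l₂ : List T.V} (hl : l₁.Disjoint l₂) {a b : T.V} (ha : a ∈ l₁)
    (hb : b ∈ l₂) : T.BackAdj (l₁ ++ l₂) a b ↔ T.adj b a := by
  refine ⟨?_, fun h =>
    Or.inr ⟨h, (List.singleton_sublist.2 ha).append (List.singleton_sublist.2 hb)⟩⟩
  rintro (⟨-, s⟩ | ⟨h, -⟩)
  · obtain ⟨r₁, r₂, hr, hr₁, hr₂⟩ := List.sublist_append_iff.1 s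
    rcases r₁ with _ | ⟨x, r₁⟩
    · subst hr
      exact (hl ha (hr₂.subset (by simp))).elim
    · simp only [List.cons_append, List.cons.injEq] at hr
      exact (hl (hr.1 ▸ hr₁.subset List.mem_cons_self) hb).elim
  · exact h

theorem adj_trans_of_not_backAdj {l : List T.V} {a b c : T.V} (ha : a ∈ l) (hb : b ∈ l)
    (hc : c ∈ l) (hab : T.adj a b) (hbc : T.adj b c) (h₁ : ¬ T.BackAdj l a b)
    (h₂ : ¬ T.BackAdj l b c) (h₃ : ¬ T.BackAdj l a c) : T.adj a c := by
  induction l with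
  | nil => simp at ha
  | cons v t ih =>
    have head_pair : ∀ x, x ≠ v → x ∈ v :: t → [v, x] <+ v :: t := fun x hx hxl =>
      List.cons_sublist_cons.2 (List.singleton_sublist.2 ((List.mem_cons.1 hxl).resolve_left hx))
    have hac : a ≠ c := by rintro rfl; exact T.asymm _ _ hab hbc
    by_cases hav : a = v
    · subst hav
      exact (T.total a c hac).resolve_right fun hca =>
        h₃ (Or.inr ⟨hca, head_pair c hac.symm hc⟩)
    by_cases hbv : b = v
    · subst hbv
      exact absurd (Or.inl ⟨hab, head_pair a hav ha⟩) h₁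
    by_cases hcv : c = v
    · subst hcv
      exact absurd (Or.inl ⟨hbc, head_pair b hbv hb⟩) h₂
    have mono : ∀ {x y}, T.BackAdj t x y → T.BackAdj (v :: t) x y :=
      BackAdj.mono (List.sublist_cons_self v t)
    exact ih ((List.mem_cons.1 ha).resolve_left hav) ((List.mem_cons.1 hb).resolve_left hbv)
      ((List.mem_cons.1 hc).resolve_left hcv) (h₁ ∘ mono) (h₂ ∘ mono) (h₃ ∘ mono)

theorem isForestOrdering_of_unique_earlier_outNeighbor {l : List T.V} (hl : l ≠ [])
    (hnd : l.Nodup) (h : ∀ u w x, [u, x] <+ l → [w, x] <+ l → T.adj x u → T.adj x w → u = w) :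
    T.IsForestOrdering l := by
  induction l using List.reverseRecOn with
  | nil => exact absurd rfl hl
  | append_singleton l x ih =>
    rcases eq_or_ne l [] with rfl | hl'
    · exact .single x
    have hsub : l <+ l ++ [x] := List.sublist_append_left l [x]
    have pair : ∀ u ∈ l, [u, x] <+ l ++ [x] := fun u hu =>
      (List.singleton_sublist.2 hu).append (List.Sublist.refl [x])
    refine .split l [x] hl' (List.cons_ne_nil x []) ?_
      (ih hl' (hnd.sublist hsub) fun u w y hu hw => h u w y (hu.trans hsub) (hw.trans hsub))
      (.single x)
    have adj_of_backAdj : ∀ u ∈ l, T.BackAdj (l ++ [x]) u x → T.adj x u := fun u hu =>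
      (backAdj_append_iff (List.disjoint_of_nodup_append hnd) hu (List.mem_singleton_self x)).1
    rintro a ha b hb c hc d hd hab hcd -
    rw [List.mem_singleton] at hb hd
    subst hb hd
    exact ⟨h a c _ (pair a ha) (pair c hc) (adj_of_backAdj a ha hab)
      (adj_of_backAdj c hc hcd), rfl⟩

def EnteringEdgesFormMatching (T : Tournament) (A : Finset T.V) : Prop :=
  ∀ a ∈ A, ∀ c ∈ A, ∀ b ∉ A, ∀ d ∉ A, T.adj b a → T.adj d c → (a = c ↔ b = d)

instance (T : Tournament) [DecidableEq T.V] [DecidableRel T.adj] (A : Finset T.V) :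
    Decidable (T.EnteringEdgesFormMatching A) := by
  unfold EnteringEdgesFormMatching; infer_instance

/-- The shape of the first split `(A, Aᶜ)` of a forest ordering. -/
def IsForestCut (T : Tournament) (A : Finset T.V) : Prop :=
  A.Nonempty ∧ (∃ b, b ∉ A) ∧ T.EnteringEdgesFormMatching A ∧
    T.IsTransSet {a | a ∈ A ∧ ∃ b ∉ A, T.adj b a}

instance (T : Tournament) [DecidableEq T.V] [DecidableRel T.adj] :
    DecidablePred T.IsForestCut := fun _ => by
  unfold IsForestCut; infer_instance

theorem IsForestTournament.exists_isForestCut [Nontrivial T.V] (hT : T.IsForestTournament) :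
    ∃ A, T.IsForestCut A := by
  classical
  obtain ⟨l, hnd, hcov, hl⟩ := hT
  cases hl with
  | single v =>
    obtain ⟨x, y, hxy⟩ := exists_pair_ne T.V
    simp only [List.mem_singleton] at hcov
    exact absurd ((hcov x).trans (hcov y).symm) hxy
  | split l₁ l₂ h₁ h₂ hsep =>
    have hdisj := List.disjoint_of_nodup_append hnd
    have mem₂ : ∀ b, b ∉ l₁ → b ∈ l₂ := fun b hb => (List.mem_append.1 (hcov b)).resolve_left hb
    have back : ∀ a ∈ l₁, ∀ b ∉ l₁, T.adj b a → T.BackAdj (l₁ ++ l₂) a b := fun a ha b hb =>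
      (backAdj_append_iff hdisj ha (mem₂ b hb)).2
    have sep : ∀ a ∈ l₁, ∀ c ∈ l₁, ∀ b ∉ l₁, ∀ d ∉ l₁, T.adj b a → T.adj d c →
        Relation.ReflTransGen (T.BackAdj (l₁ ++ l₂)) a c → a = c ∧ b = d :=
      fun a ha c hc b hb d hd hba hdc =>
        hsep a ha b (mem₂ b hb) c hc d (mem₂ d hd) (back a ha b hb hba) (back c hc d hd hdc)
    refine ⟨l₁.toFinset, ⟨l₁.head h₁, List.mem_toFinset.2 (List.head_mem h₁)⟩, ?_, ?_, ?_⟩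
    · obtain ⟨b, hb⟩ := List.exists_mem_of_ne_nil l₂ h₂
      exact ⟨b, fun h => hdisj (List.mem_toFinset.1 h) hb⟩
    · simp only [EnteringEdgesFormMatching, List.mem_toFinset]
      intro a ha c hc b hb d hd hba hdc
      constructor
      · rintro rfl
        exact (sep a ha a hc b hb d hd hba hdc .refl).2
      · rintro rfl
        exact (sep a ha c hc b hb b hd hba hdc
          (.tail (.single (back a ha b hb hba)) ((T.backGraph _).adj_symm (back c hc b hd hdc)))).1
    · simp only [IsTransSet, List.mem_toFinset]
      have heads_not_backAdj : ∀ x y, (x ∈ l₁ ∧ ∃ b ∉ l₁, T.adj b x) →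
          (y ∈ l₁ ∧ ∃ b ∉ l₁, T.adj b y) → ¬ T.BackAdj (l₁ ++ l₂) x y := by
        rintro x y ⟨hx, bx, hbx, hbxx⟩ ⟨hy, b_y, hby, hbyy⟩ hxy
        exact (T.backGraph _).ne_of_adj hxy (sep x hx y hy bx hbx b_y hby hbxx hbyy (.single hxy)).1
      intro a ha b hb c hc hab hbc
      exact adj_trans_of_not_backAdj (hcov a) (hcov b) (hcov c) hab hbc
        (heads_not_backAdj a b ha hb) (heads_not_backAdj b c hb hc)
        (heads_not_backAdj a c ha hc)

theorem not_isForestTournament_of_forall_not_isForestCut (hV : 1 < Fintype.card T.V)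
    (h : ∀ A, ¬ T.IsForestCut A) : ¬ T.IsForestTournament := fun hT =>
  have := Fintype.one_lt_card_iff_nontrivial.1 hV
  hT.exists_isForestCut.elim h

end Tournament

open Tournament in
/-- The class of forest tournaments contains `U₃` and `N`, but
contains none of `D₃`, `S₃`, `Δ₂`. -/
theorem classF_contents :
    (Utour 3).IsForestTournament ∧ Ntour.IsForestTournament ∧
      ¬ (Dtour 3).IsForestTournament ∧ ¬ Stour3.IsForestTournament ∧
      ¬ delta2.IsForestTournament := by
  refine ⟨?_, ?_, ?_, ?_, ?_⟩
  · exact ⟨[⟨0, ()⟩, ⟨1, ()⟩, ⟨4, ()⟩, ⟨2, ()⟩, ⟨3, ()⟩], by decide, by decide,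
      isForestOrdering_of_unique_earlier_outNeighbor (by decide) (by decide) (by decide)⟩
  · unfold Ntour
    exact ⟨List.finRange 5, by decide, by decide,
      isForestOrdering_of_unique_earlier_outNeighbor (by decide) (by decide) (by decide)⟩
  all_goals exact not_isForestTournament_of_forall_not_isForestCut (by decide) (by decide +kernel)
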